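/- Let K be a 3DM instance on node sets of size q in which every node occurs in at least one hyperedge, and let σ(K) be the associated spanUFP instance. If K has a hypermatching of size p, then σ(K) has a feasible solution consisting of p+7q tasks. -/

import Mathlib

/-- `ρ = max {29, 3q}`. -/
def rho (q : ℕ) : ℕ := max 29 (3 * q)

/-- The number `x'_i = iρ + 1` associated to the node `x_i`. -/
def xnum (q i : ℕ) : ℤ := (i : ℤ) * (rho q : ℤ) + 1

/-- The number `y'_j = jρ² + 2` associated to the node `y_j`. -/
def ynum (q j : ℕ) : ℤ := (j : ℤ) * (rho q : ℤ) ^ 2 + 2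

/-- The number `z'_k = kρ³ + 4` associated to the node `z_k`. -/
def znum (q k : ℕ) : ℤ := (k : ℤ) * (rho q : ℤ) ^ 3 + 4

/-- The number `h'_ℓ = -iρ - jρ² - kρ³ - 7` associated to the hyperedge `h_ℓ = (x_i, y_j, z_k)`. -/
def hnum (q : ℕ) (h : ℕ × ℕ × ℕ) : ℤ :=
  -((h.1 : ℤ) * (rho q : ℤ)) - (h.2.1 : ℤ) * (rho q : ℤ) ^ 2 - (h.2.2 : ℤ) * (rho q : ℤ) ^ 3 - 7

/-- The set `Q(K)` of the `3q + m` integers associated to a 3DM instance `K = (q, E)`. -/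
def QK (q : ℕ) (E : Finset (ℕ × ℕ × ℕ)) : Finset ℤ :=
  ((Finset.Icc 1 q).image (xnum q)) ∪ ((Finset.Icc 1 q).image (ynum q)) ∪
    ((Finset.Icc 1 q).image (znum q)) ∪ (E.image (hnum q))

/-- `(q, E)` is a 3DM instance: every hyperedge is a triple of node indices in `{1, …, q}`
(`X`, `Y` and `Z` are identified with `{1, …, q}`). -/
def ValidE (q : ℕ) (E : Finset (ℕ × ℕ × ℕ)) : Prop :=
  ∀ h ∈ E, h.1 ∈ Finset.Icc 1 q ∧ h.2.1 ∈ Finset.Icc 1 q ∧ h.2.2 ∈ Finset.Icc 1 q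

/-- A hypermatching: no two distinct hyperedges share a node. -/
def Matching (M : Finset (ℕ × ℕ × ℕ)) : Prop :=
  ∀ h ∈ M, ∀ h' ∈ M, h ≠ h' → h.1 ≠ h'.1 ∧ h.2.1 ≠ h'.2.1 ∧ h.2.2 ≠ h'.2.2

/-- `μ = 1 + max_{u' ∈ Q(K)} 10|u'|`. -/
def mu (q : ℕ) (E : Finset (ℕ × ℕ × ℕ)) : ℕ :=
  1 + (QK q E).sup (fun u => 10 * u.natAbs)

/-- `A = 5μ + 4`. -/
def Aval (q : ℕ) (E : Finset (ℕ × ℕ × ℕ)) : ℕ := 5 * mu q E + 4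

/-- The path of `σ(K)` has `(2A+1)q - 1` edges; edges are identified with the
integers `0, 1, …, (2A+1)q - 2`. -/
def numEdges (q : ℕ) (E : Finset (ℕ × ℕ × ℕ)) : ℤ := (2 * (Aval q E : ℤ) + 1) * q - 1

/-- The capacity profile of `σ(K)`: within each block of `2A` consecutive edges, the
leftmost `A` edges have capacity `4A + 4` and the rightmost `A` edges have capacity `4A`;
blocks are separated by single edges of capacity `0`. -/
def cap (q : ℕ) (E : Finset (ℕ × ℕ × ℕ)) (e : ℤ) : ℤ :=
  let A : ℤ := (Aval q E : ℤ)
  let r := e % (2 * A + 1)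
  if r < A then 4 * A + 4 else if r < 2 * A then 4 * A else 0

/-- An element `u ∈ X ∪ Y ∪ Z ∪ E` of the 3DM instance. -/
inductive Elem where
  | X : ℕ → Elem
  | Y : ℕ → Elem
  | Z : ℕ → Elem
  | H : ℕ × ℕ × ℕ → Elem
deriving DecidableEq

/-- The number `u' ∈ Q(K)` associated to `u ∈ X ∪ Y ∪ Z ∪ E`. -/
def elemVal (q : ℕ) : Elem → ℤ
  | .X i => xnum q i
  | .Y j => ynum q j
  | .Z k => znum q k
  | .H h => hnum q h

/-- `u` is an actual element of the instance `(q, E)`. -/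
def validElem (q : ℕ) (E : Finset (ℕ × ℕ × ℕ)) : Elem → Prop
  | .X i => i ∈ Finset.Icc 1 q
  | .Y j => j ∈ Finset.Icc 1 q
  | .Z k => k ∈ Finset.Icc 1 q
  | .H h => h ∈ E

/-- A task of `σ(K)` is a pair `(u, s)` with `u ∈ X ∪ Y ∪ Z ∪ E`; `s = true` encodes the
task `t_L(u)` and `s = false` encodes the task `t_R(u)`. All tasks have weight 1. -/
abbrev UTask := Elem × Bool

/-- The length of a task: `t_L(u)` has length `A - 10u'`, `t_R(u)` has length `A + 10u'`. -/
def taskLen (q : ℕ) (E : Finset (ℕ × ℕ × ℕ)) (t : UTask) : ℤ :=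
  if t.2 then (Aval q E : ℤ) - 10 * elemVal q t.1
  else (Aval q E : ℤ) + 10 * elemVal q t.1

/-- The demand of a task: `t_L(u)` has demand `A + 10u' + 1`, `t_R(u)` has demand `A - 10u'`. -/
def taskDem (q : ℕ) (E : Finset (ℕ × ℕ × ℕ)) (t : UTask) : ℤ :=
  if t.2 then (Aval q E : ℤ) + 10 * elemVal q t.1 + 1
  else (Aval q E : ℤ) - 10 * elemVal q t.1

/-- The schedule of task `t`: the contiguous interval of `taskLen` edges starting at
edge `start t`. -/
noncomputable def sched (q : ℕ) (E : Finset (ℕ × ℕ × ℕ)) (start : UTask → ℤ) (t : UTask) : Finset ℤ :=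
  Finset.Ico (start t) (start t + taskLen q E t)

/-- `(S, start)` is a feasible solution of `σ(K)`: every selected task is a task of the
instance, is scheduled (contiguously, with exactly its length) within the path, and on every
edge `e` the total demand of the selected tasks whose schedule contains `e` is at most the
capacity of `e`. -/
def Feasible (q : ℕ) (E : Finset (ℕ × ℕ × ℕ)) (S : Finset UTask) (start : UTask → ℤ) : Prop :=
  (∀ t ∈ S, validElem q E t.1) ∧
  (∀ t ∈ S, 0 ≤ start t ∧ start t + taskLen q E t ≤ numEdges q E) ∧
  (∀ e : ℤ, 0 ≤ e → e < numEdges q E →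
    ∑ t ∈ S.filter (fun t => e ∈ sched q E start t), taskDem q E t ≤ cap q E e)

/-- The first edge of the `b`-th block (`b ∈ {0, …, q-1}`). -/
def blockStart (q : ℕ) (E : Finset (ℕ × ℕ × ℕ)) (b : ℕ) : ℤ :=
  (b : ℤ) * (2 * (Aval q E : ℤ) + 1)

/-- The `b`-th block of `2A` consecutive edges (`b ∈ {0, …, q-1}`). -/
noncomputable def block (q : ℕ) (E : Finset (ℕ × ℕ × ℕ)) (b : ℕ) : Finset ℤ :=
  Finset.Ico (blockStart q E b) (blockStart q E b + 2 * (Aval q E : ℤ))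

/-!
Fill the `q` blocks as follows. The first `p` blocks carry a matched hyperedge `h = (x_i, y_j, z_k)`
together with all eight tasks of `x_i`, `y_j`, `z_k` and `h`; each of the other `q - p` blocks
carries three unmatched nodes `x`, `y`, `z` (paired up arbitrarily), their six tasks, and one task
of some hyperedge `h` through `z`. Inside a block `t_L(u)` is immediately followed by `t_R(u)`, so
the two tasks exactly fill the block's `2A` edges and together demand either `A + 10u' + 1` or
`A - 10u'` on each edge. In a matched block `x' + y' + z' + h' = 0`, which keeps the load at most
`4A + 4` on the left half of the block and at most `4A` on the right half. In an unmatched block the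
task of `h` is `t_L(h)` or `t_R(h)` according to the sign of `x' + y' + z' + h'`, and the same
bounds follow.
-/

open Finset

lemma elemVal_mem_QK {q : ℕ} {E : Finset (ℕ × ℕ × ℕ)} {u : Elem} (hu : validElem q E u) :
    elemVal q u ∈ QK q E := by
  unfold QK
  cases u with
  | X i => exact mem_union_left _ (mem_union_left _ (mem_union_left _ (mem_image_of_mem _ hu)))
  | Y j => exact mem_union_left _ (mem_union_left _ (mem_union_right _ (mem_image_of_mem _ hu)))
  | Z k => exact mem_union_left _ (mem_union_right _ (mem_image_of_mem _ hu))
  | H h => exact mem_union_right _ (mem_image_of_mem _ hu)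

lemma ten_mul_abs_elemVal_lt {q : ℕ} {E : Finset (ℕ × ℕ × ℕ)} {u : Elem}
    (hu : validElem q E u) : 10 * |elemVal q u| < mu q E := by
  have := le_sup (f := fun v : ℤ => 10 * v.natAbs) (elemVal_mem_QK hu)
  rw [Int.abs_eq_natAbs, mu]
  omega

lemma Aval_eq (q : ℕ) (E : Finset (ℕ × ℕ × ℕ)) : (Aval q E : ℤ) = 5 * mu q E + 4 := by
  simp [Aval]

lemma ten_mul_abs_elemVal_le_Aval {q : ℕ} {E : Finset (ℕ × ℕ × ℕ)} {u : Elem}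
    (hu : validElem q E u) : 10 * |elemVal q u| ≤ Aval q E := by
  have := ten_mul_abs_elemVal_lt hu
  rw [Aval_eq]
  omega

lemma xnum_pos (q i : ℕ) : 0 < xnum q i := by unfold xnum; positivity

lemma ynum_pos (q j : ℕ) : 0 < ynum q j := by unfold ynum; positivity

lemma znum_pos (q k : ℕ) : 0 < znum q k := by unfold znum; positivity

lemma hnum_neg (q : ℕ) (h : ℕ × ℕ × ℕ) : hnum q h < 0 := by
  have : 0 ≤ (h.1 : ℤ) * rho q + h.2.1 * rho q ^ 2 + h.2.2 * rho q ^ 3 := by positivity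
  unfold hnum
  linarith

lemma xnum_add_ynum_add_znum_add_hnum (q : ℕ) (h : ℕ × ℕ × ℕ) :
    xnum q h.1 + ynum q h.2.1 + znum q h.2.2 + hnum q h = 0 := by
  unfold xnum ynum znum hnum
  ring

section Blocks

variable {q : ℕ} {E : Finset (ℕ × ℕ × ℕ)}

def blockCap (A r : ℤ) : ℤ := if r < A then 4 * A + 4 else 4 * A

lemma cap_blockStart_add (b : ℕ) {r : ℤ} (hr0 : 0 ≤ r) (hr : r < 2 * Aval q E) :
    cap q E (blockStart q E b + r) = blockCap (Aval q E) r := by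
  have hmod : (blockStart q E b + r) % (2 * Aval q E + 1) = r := by
    rw [blockStart, add_comm, Int.add_mul_emod_self_right]
    exact Int.emod_eq_of_lt hr0 (by omega)
  simp only [cap, hmod, blockCap]
  split_ifs <;> omega

lemma cap_nonneg (e : ℤ) : 0 ≤ cap q E e := by
  simp only [cap]
  split_ifs <;> omega

lemma ediv_eq_of_mem_block {b : ℕ} {e : ℤ} (he : e ∈ block q E b) :
    e / (2 * Aval q E + 1) = b := by
  rw [block, blockStart, mem_Ico] at he
  exact ((Int.ediv_emod_unique (r := e - b * (2 * Aval q E + 1)) (by omega)).2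
    ⟨by ring, by omega, by omega⟩).1

lemma eq_of_mem_block {b b' : ℕ} {e : ℤ} (he : e ∈ block q E b) (he' : e ∈ block q E b') :
    b = b' := by
  exact_mod_cast (ediv_eq_of_mem_block he).symm.trans (ediv_eq_of_mem_block he')

lemma blockStart_add_le_numEdges {b : ℕ} (hb : b < q) :
    blockStart q E b + 2 * Aval q E ≤ numEdges q E := by
  have : ((b : ℤ) + 1) * (2 * Aval q E + 1) ≤ q * (2 * Aval q E + 1) := by gcongr; omega
  rw [blockStart, numEdges]
  linarith

/-- When the `T b` are pairwise disjoint, the sum picks out the block containing `t`. -/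
def blockwiseStart (q : ℕ) (E : Finset (ℕ × ℕ × ℕ)) (T : ℕ → Finset UTask)
    (off : UTask → ℤ) (t : UTask) : ℤ :=
  (∑ b ∈ range q, if t ∈ T b then blockStart q E b else 0) + off t

def localLoad (q : ℕ) (E : Finset (ℕ × ℕ × ℕ)) (off : UTask → ℤ) (T : Finset UTask)
    (r : ℤ) : ℤ :=
  ∑ t ∈ T, if off t ≤ r ∧ r < off t + taskLen q E t then taskDem q E t else 0

lemma localLoad_union {off : UTask → ℤ} {T T' : Finset UTask} (h : Disjoint T T') (r : ℤ) :
    localLoad q E off (T ∪ T') r = localLoad q E off T r + localLoad q E off T' r :=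
  sum_union h

variable {T : ℕ → Finset UTask} {off : UTask → ℤ}

lemma blockwiseStart_eq (hT : (range q : Set ℕ).PairwiseDisjoint T) {b : ℕ} (hb : b < q)
    {t : UTask} (ht : t ∈ T b) : blockwiseStart q E T off t = blockStart q E b + off t := by
  rw [blockwiseStart, sum_eq_single_of_mem b (mem_range.2 hb), if_pos ht]
  intro b' hb' hne
  exact if_neg fun ht' => disjoint_left.1 (hT hb' (mem_range.2 hb) hne) ht' ht

theorem feasible_of_blocks (hT : (range q : Set ℕ).PairwiseDisjoint T)
    (hvalid : ∀ b < q, ∀ t ∈ T b, validElem q E t.1)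
    (hfit : ∀ b < q, ∀ t ∈ T b, 0 ≤ off t ∧ off t + taskLen q E t ≤ 2 * Aval q E)
    (hload : ∀ b < q, ∀ r : ℤ, 0 ≤ r → r < 2 * Aval q E →
      localLoad q E off (T b) r ≤ blockCap (Aval q E) r) :
    Feasible q E ((range q).biUnion T) (blockwiseStart q E T off) := by
  have mem_sched {b : ℕ} (hb : b < q) {t : UTask} (ht : t ∈ T b) (e : ℤ) :
      e ∈ sched q E (blockwiseStart q E T off) t ↔
        off t ≤ e - blockStart q E b ∧ e - blockStart q E b < off t + taskLen q E t := by
    rw [sched, mem_Ico, blockwiseStart_eq hT hb ht]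
    omega
  have sched_subset {b : ℕ} (hb : b < q) {t : UTask} (ht : t ∈ T b) :
      sched q E (blockwiseStart q E T off) t ⊆ block q E b := by
    intro e he
    rw [mem_sched hb ht] at he
    rw [block, mem_Ico]
    have := hfit b hb t ht
    omega
  simp only [Feasible, mem_biUnion, mem_range]
  refine ⟨?_, ?_, ?_⟩
  · rintro t ⟨b, hb, ht⟩
    exact hvalid b hb t ht
  · rintro t ⟨b, hb, ht⟩
    have := hfit b hb t ht
    have := blockStart_add_le_numEdges (E := E) hb
    have : 0 ≤ blockStart q E b := by unfold blockStart; positivity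
    rw [blockwiseStart_eq hT hb ht]
    omega
  · intro e _ _
    rcases eq_empty_or_nonempty
        {t ∈ (range q).biUnion T | e ∈ sched q E (blockwiseStart q E T off) t} with
      h | ⟨t₀, ht₀⟩
    · rw [h, sum_empty]
      exact cap_nonneg e
    obtain ⟨⟨b, hb, ht₀b⟩, he₀⟩ := by simpa only [mem_filter, mem_biUnion, mem_range] using ht₀
    have heb := sched_subset hb ht₀b he₀
    set r := e - blockStart q E b
    have hfilter : {t ∈ (range q).biUnion T | e ∈ sched q E (blockwiseStart q E T off) t} =
        {t ∈ T b | off t ≤ r ∧ r < off t + taskLen q E t} := by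
      ext t
      simp only [mem_filter, mem_biUnion, mem_range]
      constructor
      · rintro ⟨⟨b', hb', ht⟩, he⟩
        obtain rfl := eq_of_mem_block (sched_subset hb' ht he) heb
        exact ⟨ht, (mem_sched hb' ht e).1 he⟩
      · rintro ⟨ht, hrt⟩
        exact ⟨⟨b, hb, ht⟩, (mem_sched hb ht e).2 hrt⟩
    rw [block, mem_Ico] at heb
    rw [hfilter, sum_filter, show e = blockStart q E b + r by omega,
      cap_blockStart_add b (by omega) (by omega)]
    exact hload b hb r (by omega) (by omega)

end Blocks

section Gadget

variable {q : ℕ} {E : Finset (ℕ × ℕ × ℕ)}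

def pairOffset (q : ℕ) (E : Finset (ℕ × ℕ × ℕ)) (t : UTask) : ℤ :=
  if t.2 then 0 else Aval q E - 10 * elemVal q t.1

def pair (u : Elem) : Finset UTask := {(u, true), (u, false)}

def pairLoad (A u r : ℤ) : ℤ := if r < A - 10 * u then A + 10 * u + 1 else A - 10 * u

lemma pairOffset_fit {u : Elem} (hu : 10 * |elemVal q u| ≤ Aval q E) (s : Bool) :
    0 ≤ pairOffset q E (u, s) ∧ pairOffset q E (u, s) + taskLen q E (u, s) ≤ 2 * Aval q E := by
  have := le_abs_self (elemVal q u)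
  have := neg_abs_le (elemVal q u)
  cases s <;> simp only [pairOffset, taskLen, Bool.false_eq_true, if_true, if_false] <;> omega

lemma localLoad_pair (u : Elem) {r : ℤ} (hr0 : 0 ≤ r) (hr : r < 2 * Aval q E) :
    localLoad q E (pairOffset q E) (pair u) r = pairLoad (Aval q E) (elemVal q u) r := by
  rw [localLoad, pair, sum_pair (by simp)]
  simp only [pairOffset, taskLen, taskDem, pairLoad, Bool.false_eq_true, if_true, if_false]
  split_ifs <;> omega

lemma localLoad_left (u : Elem) {r : ℤ} (hr0 : 0 ≤ r) :
    localLoad q E (pairOffset q E) {(u, true)} r =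
      if r < Aval q E - 10 * elemVal q u then Aval q E + 10 * elemVal q u + 1 else 0 := by
  simp only [localLoad, sum_singleton, pairOffset, taskLen, taskDem, if_true]
  split_ifs <;> omega

lemma localLoad_right (u : Elem) {r : ℤ} (hr : r < 2 * Aval q E) :
    localLoad q E (pairOffset q E) {(u, false)} r =
      if Aval q E - 10 * elemVal q u ≤ r then Aval q E - 10 * elemVal q u else 0 := by
  simp only [localLoad, sum_singleton, pairOffset, taskLen, taskDem, Bool.false_eq_true,
    if_false]
  split_ifs <;> omega

variable {A x y z h r : ℤ}

lemma pairLoad_add_le_blockCap (hx : 0 < x) (hy : 0 < y) (hz : 0 < z)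
    (hsum : x + y + z + h = 0) :
    pairLoad A x r + pairLoad A y r + pairLoad A z r + pairLoad A h r ≤ blockCap A r := by
  unfold pairLoad blockCap
  split_ifs <;> omega

lemma pairLoad_add_left_le_blockCap (hA : 0 ≤ A) (hx : 0 < x) (hy : 0 < y) (hz : 0 < z)
    (hsum : x + y + z + h < 0) :
    pairLoad A x r + pairLoad A y r + pairLoad A z r +
      (if r < A - 10 * h then A + 10 * h + 1 else 0) ≤ blockCap A r := by
  unfold pairLoad blockCap
  split_ifs <;> omega

lemma pairLoad_add_right_le_blockCap (hx : 0 < x) (hy : 0 < y) (hz : 0 < z) (hh : h < 0)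
    (hsum : 0 ≤ x + y + z + h) (hA : 10 * (x + y + z) ≤ A + 1) :
    pairLoad A x r + pairLoad A y r + pairLoad A z r +
      (if A - 10 * h ≤ r then A - 10 * h else 0) ≤ blockCap A r := by
  unfold pairLoad blockCap
  split_ifs <;> omega

end Gadget

lemma sum_range_ite_lt (p q : ℕ) : ∑ b ∈ range q, (if b < p then 8 else 7) = min p q + 7 * q := by
  induction q with
  | zero => simp
  | succ q ih =>
    rw [sum_range_succ, ih]
    split_ifs <;> omega

/-- Block `b < q` receives the nodes `x_{x b}`, `y_{y b}`, `z_{z b}` and the hyperedge `edge b`;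
in the first `p` blocks the hyperedge is the node triple itself. -/
structure BlockCover (q : ℕ) (E : Finset (ℕ × ℕ × ℕ)) (p : ℕ) where
  x : ℕ → ℕ
  y : ℕ → ℕ
  z : ℕ → ℕ
  edge : ℕ → ℕ × ℕ × ℕ
  le : p ≤ q
  mapsTo_x : Set.MapsTo x (Set.Iio q) (Icc 1 q)
  mapsTo_y : Set.MapsTo y (Set.Iio q) (Icc 1 q)
  mapsTo_z : Set.MapsTo z (Set.Iio q) (Icc 1 q)
  mapsTo_edge : Set.MapsTo edge (Set.Iio q) E
  injOn_x : Set.InjOn x (Set.Iio q)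
  injOn_y : Set.InjOn y (Set.Iio q)
  injOn_z : Set.InjOn z (Set.Iio q)
  injOn_edge : Set.InjOn edge (Set.Iio q)
  edge_eq : ∀ b < p, edge b = (x b, y b, z b)

namespace BlockCover

variable {q p : ℕ} {E : Finset (ℕ × ℕ × ℕ)} (C : BlockCover q E p)

def surplus (b : ℕ) : ℤ :=
  xnum q (C.x b) + ynum q (C.y b) + znum q (C.z b) + hnum q (C.edge b)

/-- In an unmatched block only one task of `edge b` fits, `t_L` or `t_R` according to the sign
of the surplus. -/
def edgeTasks (b : ℕ) : Finset UTask :=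
  if b < p then pair (.H (C.edge b)) else {(.H (C.edge b), decide (C.surplus b < 0))}

def tasks (b : ℕ) : Finset UTask :=
  pair (.X (C.x b)) ∪ pair (.Y (C.y b)) ∪ pair (.Z (C.z b)) ∪ C.edgeTasks b

lemma mem_tasks {b : ℕ} {t : UTask} (ht : t ∈ C.tasks b) :
    t.1 = .X (C.x b) ∨ t.1 = .Y (C.y b) ∨ t.1 = .Z (C.z b) ∨ t.1 = .H (C.edge b) := by
  unfold tasks edgeTasks pair at ht
  split_ifs at ht <;> simp only [mem_union, mem_insert, mem_singleton] at ht <;>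
    rcases ht with ((((rfl | rfl) | rfl | rfl) | rfl | rfl) | rfl | rfl) <;> simp

lemma pairwiseDisjoint_tasks : (range q : Set ℕ).PairwiseDisjoint C.tasks := by
  intro b hb b' hb' hne
  refine disjoint_left.2 fun t ht ht' => hne ?_
  simp only [coe_range, Set.mem_Iio] at hb hb'
  rcases C.mem_tasks ht with h | h | h | h <;> rcases C.mem_tasks ht' with h' | h' | h' | h' <;>
    rw [h] at h' <;> simp only [reduceCtorEq, Elem.X.injEq, Elem.Y.injEq, Elem.Z.injEq,
      Elem.H.injEq] at h'
  exacts [C.injOn_x hb hb' h', C.injOn_y hb hb' h', C.injOn_z hb hb' h', C.injOn_edge hb hb' h']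

lemma validElem_of_mem_tasks {b : ℕ} (hb : b < q) {t : UTask} (ht : t ∈ C.tasks b) :
    validElem q E t.1 := by
  rcases C.mem_tasks ht with h | h | h | h <;> rw [h]
  exacts [C.mapsTo_x hb, C.mapsTo_y hb, C.mapsTo_z hb, C.mapsTo_edge hb]

lemma card_tasks (b : ℕ) : #(C.tasks b) = if b < p then 8 else 7 := by
  unfold tasks edgeTasks pair
  split_ifs <;> simp

lemma ten_mul_nodes_le {b : ℕ} (hb : b < q) :
    10 * (xnum q (C.x b) + ynum q (C.y b) + znum q (C.z b)) ≤ Aval q E + 1 := by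
  have hx := le_abs_self (xnum q (C.x b))
  have hy := le_abs_self (ynum q (C.y b))
  have hz := le_abs_self (znum q (C.z b))
  have hx' := ten_mul_abs_elemVal_lt (E := E) (u := .X (C.x b)) (C.mapsTo_x hb)
  have hy' := ten_mul_abs_elemVal_lt (E := E) (u := .Y (C.y b)) (C.mapsTo_y hb)
  have hz' := ten_mul_abs_elemVal_lt (E := E) (u := .Z (C.z b)) (C.mapsTo_z hb)
  simp only [elemVal] at hx' hy' hz'
  rw [Aval_eq]
  omega

lemma localLoad_tasks_le {b : ℕ} (hb : b < q) {r : ℤ} (hr0 : 0 ≤ r) (hr : r < 2 * Aval q E) :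
    localLoad q E (pairOffset q E) (C.tasks b) r ≤ blockCap (Aval q E) r := by
  have hx := xnum_pos q (C.x b)
  have hy := ynum_pos q (C.y b)
  have hz := znum_pos q (C.z b)
  rw [tasks, localLoad_union (by unfold edgeTasks; split_ifs <;> simp [pair]),
    localLoad_union (by simp [pair]), localLoad_union (by simp [pair]), localLoad_pair _ hr0 hr,
    localLoad_pair _ hr0 hr, localLoad_pair _ hr0 hr, edgeTasks]
  split_ifs with hbp
  · rw [localLoad_pair _ hr0 hr]
    refine pairLoad_add_le_blockCap hx hy hz ?_
    rw [C.edge_eq b hbp]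
    exact xnum_add_ynum_add_znum_add_hnum q (C.x b, C.y b, C.z b)
  by_cases hs : C.surplus b < 0
  · rw [decide_eq_true hs, localLoad_left _ hr0]
    exact pairLoad_add_left_le_blockCap (by positivity) hx hy hz hs
  · rw [decide_eq_false hs, localLoad_right _ hr]
    exact pairLoad_add_right_le_blockCap hx hy hz (hnum_neg q _) (not_lt.1 hs)
      (C.ten_mul_nodes_le hb)

theorem feasible :
    Feasible q E ((range q).biUnion C.tasks) (blockwiseStart q E C.tasks (pairOffset q E)) :=
  feasible_of_blocks C.pairwiseDisjoint_tasks (fun _ hb _ ht => C.validElem_of_mem_tasks hb ht)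
    (fun _ hb t ht => pairOffset_fit (ten_mul_abs_elemVal_le_Aval
      (C.validElem_of_mem_tasks hb ht)) t.2)
    (fun _ hb _ hr0 hr => C.localLoad_tasks_le hb hr0 hr)

theorem card_biUnion_tasks : #((range q).biUnion C.tasks) = p + 7 * q := by
  rw [card_biUnion C.pairwiseDisjoint_tasks]
  simp only [C.card_tasks]
  rw [sum_range_ite_lt, min_eq_left C.le]

end BlockCover

lemma exists_bijOn_Iio_card {α : Type*} [Nonempty α] (s : Finset α) :
    ∃ f : ℕ → α, Set.BijOn f (Set.Iio #s) s := by
  refine (Set.finite_Iio _).exists_bijOn_of_encard_eq ?_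
  rw [← coe_range, Set.encard_coe_eq_coe_finsetCard, Set.encard_coe_eq_coe_finsetCard,
    card_range]

section Glue

variable {α : Type*} {g f : ℕ → α} {p n : ℕ} {s t : Set α}

lemma mapsTo_ite_lt (hg : Set.MapsTo g (Set.Iio p) s) (hf : Set.MapsTo f (Set.Iio n) t) :
    Set.MapsTo (fun b => if b < p then g b else f (b - p)) (Set.Iio (p + n)) (s ∪ t) := by
  intro b hb
  simp only [Set.mem_Iio] at hb
  dsimp only
  split_ifs with hbp
  · exact Or.inl (hg hbp)
  · exact Or.inr (hf (show b - p < n by omega))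

lemma injOn_ite_lt (hg : Set.InjOn g (Set.Iio p)) (hgs : Set.MapsTo g (Set.Iio p) s)
    (hf : Set.InjOn f (Set.Iio n)) (hft : Set.MapsTo f (Set.Iio n) t) (hst : Disjoint s t) :
    Set.InjOn (fun b => if b < p then g b else f (b - p)) (Set.Iio (p + n)) := by
  intro a ha b hb hab
  simp only [Set.mem_Iio] at ha hb
  by_cases ha' : a < p <;> by_cases hb' : b < p <;> simp only [ha', hb', if_true, if_false] at hab
  · exact hg ha' hb' hab
  · exact absurd hab (hst.ne_of_mem (hgs ha') (hft (show b - p < n by omega)))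
  · exact absurd hab.symm (hst.ne_of_mem (hgs hb') (hft (show a - p < n by omega)))
  · have := hf (show a - p < n by omega) (show b - p < n by omega) hab
    omega

end Glue

section Matching

variable {q : ℕ} {M : Finset (ℕ × ℕ × ℕ)}

lemma Matching.injOn_fst (hM : Matching M) : Set.InjOn Prod.fst (M : Set (ℕ × ℕ × ℕ)) :=
  fun a ha b hb hab => by_contra fun hne => (hM a ha b hb hne).1 hab

lemma Matching.injOn_snd_fst (hM : Matching M) : Set.InjOn (fun h : ℕ × ℕ × ℕ => h.2.1) M :=
  fun a ha b hb hab => by_contra fun hne => (hM a ha b hb hne).2.1 hab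

lemma Matching.injOn_snd_snd (hM : Matching M) : Set.InjOn (fun h : ℕ × ℕ × ℕ => h.2.2) M :=
  fun a ha b hb hab => by_contra fun hne => (hM a ha b hb hne).2.2 hab

lemma exists_injOn_extend {g : ℕ → ℕ × ℕ × ℕ} (hg : Set.BijOn g (Set.Iio #M) M)
    {π : ℕ × ℕ × ℕ → ℕ} (hπM : Set.MapsTo π M (Icc 1 q)) (hπ : Set.InjOn π M) :
    ∃ f : ℕ → ℕ, (∀ b < #M, f b = π (g b)) ∧ Set.MapsTo f (Set.Iio q) (Icc 1 q) ∧
      Set.InjOn f (Set.Iio q) := by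
  set U := Icc 1 q \ M.image π
  have hcard : #M + #U = q := by
    have hsub : M.image π ⊆ Icc 1 q := image_subset_iff.2 hπM
    have := card_le_card hsub
    rw [card_sdiff_of_subset hsub, card_image_of_injOn hπ, Nat.card_Icc] at *
    omega
  obtain ⟨fU, hfU⟩ := exists_bijOn_Iio_card U
  have hgπ : Set.MapsTo (π ∘ g) (Set.Iio #M) (M.image π) :=
    fun b hb => mem_image_of_mem π (hg.mapsTo hb)
  have hIio : Set.Iio q = Set.Iio (#M + #U) := by rw [hcard]
  refine ⟨fun b => if b < #M then π (g b) else fU (b - #M), fun b hb => if_pos hb, ?_, ?_⟩ <;>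
    rw [hIio]
  · exact (mapsTo_ite_lt (hπM.comp hg.mapsTo) hfU.mapsTo).mono_right
      (Set.union_subset subset_rfl (coe_subset.2 sdiff_subset))
  · exact injOn_ite_lt (hπ.comp hg.injOn hg.mapsTo) hgπ hfU.injOn hfU.mapsTo
      (disjoint_coe.2 disjoint_sdiff)

theorem Matching.exists_blockCover {E : Finset (ℕ × ℕ × ℕ)} (hE : ValidE q E)
    (hoccZ : ∀ l ∈ Icc 1 q, ∃ h ∈ E, h.2.2 = l) (hME : M ⊆ E) (hM : Matching M) :
    Nonempty (BlockCover q E #M) := by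
  obtain ⟨g, hg⟩ := exists_bijOn_Iio_card M
  obtain ⟨x, hxg, hx, hx'⟩ :=
    exists_injOn_extend hg (fun h hh => (hE h (hME hh)).1) hM.injOn_fst
  obtain ⟨y, hyg, hy, hy'⟩ :=
    exists_injOn_extend hg (fun h hh => (hE h (hME hh)).2.1) hM.injOn_snd_fst
  obtain ⟨z, hzg, hz, hz'⟩ :=
    exists_injOn_extend hg (fun h hh => (hE h (hME hh)).2.2) hM.injOn_snd_snd
  choose! e heE hez using hoccZ
  set edge : ℕ → ℕ × ℕ × ℕ := fun b => if b < #M then g b else e (z b)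
  have hedge_z {b : ℕ} (hb : b < q) : (edge b).2.2 = z b := by
    by_cases hbM : b < #M
    · simp only [edge, if_pos hbM, hzg b hbM]
    · simp only [edge, if_neg hbM, hez _ (hz hb)]
  refine ⟨{
    x := x, y := y, z := z, edge := edge, le := ?_
    mapsTo_x := hx, mapsTo_y := hy, mapsTo_z := hz, mapsTo_edge := ?_
    injOn_x := hx', injOn_y := hy', injOn_z := hz', injOn_edge := ?_
    edge_eq := ?_ }⟩
  · simpa using card_le_card_of_injOn Prod.fst (fun h hh => (hE h (hME hh)).1) hM.injOn_fst
  · intro b hb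
    by_cases hbM : b < #M
    · simpa only [edge, if_pos hbM, mem_coe] using hME (hg.mapsTo hbM)
    · simpa only [edge, if_neg hbM, mem_coe] using heE _ (hz hb)
  · intro a ha b hb hab
    exact hz' ha hb (by rw [← hedge_z ha, ← hedge_z hb, hab])
  · intro b hb
    simp only [edge, if_pos hb, hxg b hb, hyg b hb, hzg b hb]

end Matching

theorem matching_to_schedule_general (q : ℕ) (E : Finset (ℕ × ℕ × ℕ)) (hE : ValidE q E)
    (hoccZ : ∀ l ∈ Finset.Icc 1 q, ∃ h ∈ E, h.2.2 = l)
    (M : Finset (ℕ × ℕ × ℕ)) (hME : M ⊆ E) (hM : Matching M) (p : ℕ) (hp : M.card = p) :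
    ∃ (S : Finset UTask) (start : UTask → ℤ),
      Feasible q E S start ∧ S.card = p + 7 * q := by
  obtain ⟨C⟩ := hM.exists_blockCover hE hoccZ hME
  subst hp
  exact ⟨_, _, C.feasible, C.card_biUnion_tasks⟩

/-- If `K` is a 3DM instance on node sets of size `q` in which every node occurs in at least
one hyperedge, and `K` has a hypermatching of size `p`, then `σ(K)` has a feasible solution
consisting of `p + 7q` tasks. -/
theorem matching_to_schedule (q : ℕ) (E : Finset (ℕ × ℕ × ℕ)) (hE : ValidE q E)
    (hoccX : ∀ i ∈ Finset.Icc 1 q, ∃ h ∈ E, h.1 = i)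
    (hoccY : ∀ j ∈ Finset.Icc 1 q, ∃ h ∈ E, h.2.1 = j)
    (hoccZ : ∀ l ∈ Finset.Icc 1 q, ∃ h ∈ E, h.2.2 = l)
    (M : Finset (ℕ × ℕ × ℕ)) (hME : M ⊆ E) (hM : Matching M) (p : ℕ) (hp : M.card = p) :
    ∃ (S : Finset UTask) (start : UTask → ℤ),
      Feasible q E S start ∧ S.card = p + 7 * q :=
  matching_to_schedule_general q E hE hoccZ M hME hM p hp
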